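/- arXiv:2604.15144 — 3 statements merged into one kernel-verified Lean document; each statement's English description precedes it below -/
import Mathlib

section
/- Let X be a nonempty set and (Y, ‖·‖) a real Banach space. Let L₁, L₂ : X → Y be maps such that L₂ is bijective, and suppose there exist constants c > 0 and K ∈ [0,1) such that for all v₁, v₂ ∈ X, ‖L₂(v₁) − L₂(v₂) − c(L₁(v₁) − L₁(v₂))‖ ≤ K‖L₂(v₁) − L₂(v₂)‖. Then L₁ is bijective. -/
/-- **Campanato nearness theorem.** If `L₂ : X → Y` is a bijection into a real Banach
space and `L₁` is Campanato-near `L₂` (with constants `c > 0`, `K ∈ [0,1)`),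
then `L₁` is bijective. -/
theorem campanato_nearness_bijective {X Y : Type*} [Nonempty X]
    [NormedAddCommGroup Y] [NormedSpace ℝ Y] [CompleteSpace Y]
    (L₁ L₂ : X → Y) (hL₂ : Function.Bijective L₂)
    (c K : ℝ) (hc : 0 < c) (hK0 : 0 ≤ K) (hK1 : K < 1)
    (hnear : ∀ v₁ v₂ : X,
      ‖L₂ v₁ - L₂ v₂ - c • (L₁ v₁ - L₁ v₂)‖ ≤ K * ‖L₂ v₁ - L₂ v₂‖) :
    Function.Bijective L₁ := by
  constructor
  · intro v₁ v₂ h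
    have h1 := hnear v₁ v₂
    rw [h, sub_self, smul_zero, sub_zero] at h1
    have : ‖L₂ v₁ - L₂ v₂‖ = 0 := by nlinarith [norm_nonneg (L₂ v₁ - L₂ v₂)]
    have : L₂ v₁ = L₂ v₂ := by
      rwa [norm_eq_zero, sub_eq_zero] at this
    exact hL₂.1 this
  · intro w
    set T : Y → Y := fun y => y - c • L₁ (Function.surjInv hL₂.2 y) + c • w with hT
    have hlip : LipschitzWith ⟨K, hK0⟩ T := by
      apply LipschitzWith.of_dist_le_mul
      intro y₁ y₂
      simp only [hT, dist_eq_norm]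
      have key := hnear (Function.surjInv hL₂.2 y₁) (Function.surjInv hL₂.2 y₂)
      have h₁ : L₂ (Function.surjInv hL₂.2 y₁) = y₁ := Function.surjInv_eq hL₂.2 y₁
      have h₂ : L₂ (Function.surjInv hL₂.2 y₂) = y₂ := Function.surjInv_eq hL₂.2 y₂
      rw [h₁, h₂] at key
      calc ‖y₁ - c • L₁ (Function.surjInv hL₂.2 y₁) + c • w - (y₂ - c • L₁ (Function.surjInv hL₂.2 y₂) + c • w)‖
          = ‖y₁ - y₂ - c • (L₁ (Function.surjInv hL₂.2 y₁) - L₁ (Function.surjInv hL₂.2 y₂))‖ := by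
            congr 1; rw [smul_sub]; abel
        _ ≤ K * ‖y₁ - y₂‖ := key
    have hcontr : ContractingWith ⟨K, hK0⟩ T := ⟨by exact_mod_cast hK1, hlip⟩
    have : Nonempty Y := ⟨0⟩
    obtain ⟨y, hy⟩ := hcontr.exists_fixedPoint 0 (by simp [edist_ne_top])
    have hfix : T y = y := hy.1
    have h3 : c • w = c • L₁ (Function.surjInv hL₂.2 y) := by
      simp only [hT] at hfix
      have h2 : c • w - c • L₁ (Function.surjInv hL₂.2 y) = 0 := by
        have : y - c • L₁ (Function.surjInv hL₂.2 y) + c • w - y = 0 := by rw [hfix]; abel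
        rw [← this]; abel
      rw [sub_eq_zero] at h2; exact h2
    exact ⟨Function.surjInv hL₂.2 y, (smul_right_injective Y (ne_of_gt hc) h3).symm⟩
end

section
/- Let d ≥ 2, let A be a real symmetric positive definite d×d matrix and b ∈ ℝ^d, and suppose (A:A + b·b)/(tr(A))² ≤ 1/(d−1+δ) for some δ ∈ (0,1]. Then for every ξ ∈ ℝ^d and every real symmetric d×d matrix M, with γ := tr(A)/(A:A + b·b) > 0, one has |γ(A:M) + γ(b·ξ) − tr(M)|² ≤ (1−δ)(M:M + |ξ|²). -/
open Matrix

/-- Pointwise Cauchy–Schwarz estimate underlying the nearness of the renormalized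
nondivergence-form operator to the Laplacian: under the Cordes condition, for every
`ξ ∈ ℝ^d` and every real symmetric matrix `M`, with `γ = tr A / (A:A + |b|²)`,
`|γ(A:M) + γ(b·ξ) - tr M|² ≤ (1-δ)(M:M + |ξ|²)`. -/
theorem cordes_cauchy_schwarz {d : ℕ} (hd : 2 ≤ d)
    (A : Matrix (Fin d) (Fin d) ℝ) (hAsymm : A.IsSymm) (hApos : A.PosDef)
    (b : Fin d → ℝ) (δ : ℝ) (hδ0 : 0 < δ) (hδ1 : δ ≤ 1)
    (hCordes : ((Aᵀ * A).trace + b ⬝ᵥ b) / A.trace ^ 2 ≤ 1 / ((d : ℝ) - 1 + δ)) :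
    ∀ γ : ℝ, γ = A.trace / ((Aᵀ * A).trace + b ⬝ᵥ b) →
      ∀ (ξ : Fin d → ℝ) (M : Matrix (Fin d) (Fin d) ℝ), M.IsSymm →
        |γ * (Aᵀ * M).trace + γ * (b ⬝ᵥ ξ) - M.trace| ^ 2 ≤
          (1 - δ) * ((Mᵀ * M).trace + ξ ⬝ᵥ ξ) := by
  intro γ hγ ξ M hM
  haveI : NeZero d := ⟨by omega⟩
  -- diagonal entries of A are positive
  have hdiag : ∀ i : Fin d, 0 < A i i := by
    intro i
    have hne : (Pi.single i 1 : Fin d → ℝ) ≠ 0 := by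
      intro h
      have := congrFun h i
      simp at this
    have := hApos.dotProduct_mulVec_pos hne
    simpa [dotProduct, Matrix.mulVec, Pi.single_apply] using this
  have htrA : 0 < A.trace := by
    rw [Matrix.trace]
    exact Finset.sum_pos (fun i _ => hdiag i) ⟨0, Finset.mem_univ 0⟩
  -- trace formulas
  have trAA : (Aᵀ * A).trace = ∑ i, ∑ j, A i j * A i j := by
    simp only [Matrix.trace, Matrix.mul_apply, Matrix.diag, Matrix.transpose_apply]
    rw [Finset.sum_comm]
  have trAM : (Aᵀ * M).trace = ∑ i, ∑ j, A i j * M i j := by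
    simp only [Matrix.trace, Matrix.mul_apply, Matrix.diag, Matrix.transpose_apply]
    rw [Finset.sum_comm]
  have trMM : (Mᵀ * M).trace = ∑ i, ∑ j, M i j * M i j := by
    simp only [Matrix.trace, Matrix.mul_apply, Matrix.diag, Matrix.transpose_apply]
    rw [Finset.sum_comm]
  set Sig : ℝ := (Aᵀ * A).trace + b ⬝ᵥ b with hSig
  have hSigpos : 0 < Sig := by
    have h1 : 0 < (Aᵀ * A).trace := by
      rw [trAA]
      refine Finset.sum_pos' (fun i _ => Finset.sum_nonneg fun j _ => mul_self_nonneg _) ?_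
      exact ⟨0, Finset.mem_univ 0, Finset.sum_pos' (fun j _ => mul_self_nonneg _)
        ⟨0, Finset.mem_univ 0, mul_pos (hdiag 0) (hdiag 0)⟩⟩
    have h2 : 0 ≤ b ⬝ᵥ b := by
      simp only [dotProduct]
      exact Finset.sum_nonneg fun i _ => mul_self_nonneg _
    linarith
  have hden : (0:ℝ) < (d:ℝ) - 1 + δ := by
    have : (2:ℝ) ≤ (d:ℝ) := by exact_mod_cast hd
    linarith
  have hgS : γ * Sig = A.trace := by
    rw [hγ]; field_simp
  -- Cordes rearranged
  have key : (d:ℝ) - γ * A.trace ≤ 1 - δ := by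
    have h1 : Sig * ((d:ℝ) - 1 + δ) ≤ A.trace ^ 2 := by
      have := (div_le_div_iff₀ (by positivity) hden).mp hCordes
      linarith
    have h3 : γ * A.trace * Sig = A.trace ^ 2 := by
      linear_combination A.trace * hgS
    nlinarith [h1, h3, hSigpos]
  -- Cauchy–Schwarz
  set f : (Fin d × Fin d) ⊕ Fin d → ℝ :=
    Sum.elim (fun p => γ * A p.1 p.2 - if p.1 = p.2 then 1 else 0) (fun i => γ * b i) with hf
  set g : (Fin d × Fin d) ⊕ Fin d → ℝ := Sum.elim (fun p => M p.1 p.2) ξ with hg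
  have hCS := Finset.sum_mul_sq_le_sq_mul_sq Finset.univ f g
  have hS : ∑ x, f x * g x = γ * (Aᵀ * M).trace + γ * (b ⬝ᵥ ξ) - M.trace := by
    rw [Fintype.sum_sum_type, Fintype.sum_prod_type]
    simp only [hf, hg, Sum.elim_inl, Sum.elim_inr, sub_mul, ite_mul, one_mul, zero_mul,
      Finset.sum_sub_distrib, Finset.sum_ite_eq, Finset.mem_univ, if_true]
    rw [trAM, Matrix.trace]
    simp only [dotProduct, Matrix.diag, Finset.mul_sum]
    ring_nf
  have hgS' : γ * ((Aᵀ * A).trace + b ⬝ᵥ b) = A.trace := by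
    rw [← hSig]; exact hgS
  have hγ2 : γ ^ 2 * (Aᵀ * A).trace + γ ^ 2 * (b ⬝ᵥ b) = γ * A.trace := by
    linear_combination γ * hgS'
  have trA' : ∑ i, A i i = A.trace := by
    simp [Matrix.trace, Matrix.diag]
  have hP : ∑ x, f x ^ 2 = (d:ℝ) - γ * A.trace := by
    rw [Fintype.sum_sum_type, Fintype.sum_prod_type]
    simp only [hf, Sum.elim_inl, Sum.elim_inr]
    have expand : ∀ i j : Fin d, (γ * A i j - if i = j then 1 else 0) ^ 2
        = γ^2 * (A i j * A i j) - (if i = j then 2 * γ * A i j else 0)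
          + (if i = j then 1 else 0) := by
      intro i j
      by_cases h : i = j <;> simp [h] <;> ring
    simp only [expand, Finset.sum_add_distrib, Finset.sum_sub_distrib, Finset.sum_ite_eq,
      Finset.mem_univ, if_true, ← Finset.mul_sum]
    rw [← trAA]
    have hb2 : ∑ i, (γ * b i) ^ 2 = γ^2 * (b ⬝ᵥ b) := by
      simp only [dotProduct, Finset.mul_sum]
      exact Finset.sum_congr rfl fun i _ => by ring
    rw [hb2]
    have hone : ∑ _i : Fin d, (1:ℝ) = (d:ℝ) := by simp
    rw [hone]
    rw [trA']
    linarith [hγ2]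
  have hQ : ∑ x, g x ^ 2 = (Mᵀ * M).trace + ξ ⬝ᵥ ξ := by
    rw [Fintype.sum_sum_type, Fintype.sum_prod_type]
    simp only [hg, Sum.elim_inl, Sum.elim_inr]
    rw [trMM]
    simp [dotProduct, sq]
  have hQnn : 0 ≤ (Mᵀ * M).trace + ξ ⬝ᵥ ξ := by
    rw [← hQ]
    exact Finset.sum_nonneg fun x _ => sq_nonneg _
  rw [sq_abs]
  calc (γ * (Aᵀ * M).trace + γ * (b ⬝ᵥ ξ) - M.trace) ^ 2
      = (∑ x, f x * g x) ^ 2 := by rw [hS]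
    _ ≤ (∑ x, f x ^ 2) * ∑ x, g x ^ 2 := hCS
    _ = ((d:ℝ) - γ * A.trace) * ((Mᵀ * M).trace + ξ ⬝ᵥ ξ) := by rw [hP, hQ]
    _ ≤ (1 - δ) * ((Mᵀ * M).trace + ξ ⬝ᵥ ξ) := by
        exact mul_le_mul_of_nonneg_right key hQnn
end

section
/- Let H be a real Hilbert space, 𝔞 : H × H → ℝ a symmetric continuous coercive bilinear form with coercivity constant α > 0, W ⊂ H a closed subspace, and Ṽ := {v ∈ H : 𝔞(v,w) = 0 for all w ∈ W} its 𝔞-orthogonal complement. Let z ∈ H satisfy 𝔞(z,φ) = F(φ) for all φ ∈ H, let z̃ ∈ Ṽ satisfy 𝔞(z̃,ṽ) = F(ṽ) for all ṽ ∈ Ṽ, and let q ∈ W satisfy 𝔞(q,w) = G(w) for all w ∈ W, where F, G ∈ H*. Then ẑ := z̃ + q satisfies z − ẑ ∈ W and α‖z − ẑ‖² ≤ (F − G)(z − ẑ). -/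
/-- Abstract error identity of the post-processed ideal multiscale method:
if `Ṽ` is the `𝔞`-orthogonal complement of the closed subspace `W`, `z` solves the full
variational problem with data `F`, `z̃ ∈ Ṽ` is its Galerkin approximation, and `q ∈ W`
solves the corrector problem with data `G`, then `ẑ = z̃ + q` satisfies `z - ẑ ∈ W` and
`α ‖z - ẑ‖² ≤ (F - G)(z - ẑ)`. -/
theorem ideal_method_error_identity {H : Type*} [NormedAddCommGroup H]
    [InnerProductSpace ℝ H] [CompleteSpace H]
    (a : H → H → ℝ)
    (haddl : ∀ x y v : H, a (x + y) v = a x v + a y v)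
    (hsmull : ∀ (r : ℝ) (x v : H), a (r • x) v = r * a x v)
    (hsymm : ∀ x y : H, a x y = a y x)
    (Ca α : ℝ) (hα : 0 < α)
    (hbdd : ∀ x y : H, |a x y| ≤ Ca * ‖x‖ * ‖y‖)
    (hcoer : ∀ x : H, α * ‖x‖ ^ 2 ≤ a x x)
    (W : Submodule ℝ H) (hW : IsClosed (W : Set H))
    (F G : H →L[ℝ] ℝ)
    (z zt q : H)
    (hz : ∀ φ : H, a z φ = F φ)
    (hztmem : ∀ w ∈ W, a zt w = 0)
    (hzt : ∀ v : H, (∀ w ∈ W, a v w = 0) → a zt v = F v)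
    (hqmem : q ∈ W)
    (hq : ∀ w ∈ W, a q w = G w) :
    z - (zt + q) ∈ W ∧ α * ‖z - (zt + q)‖ ^ 2 ≤ F (z - (zt + q)) - G (z - (zt + q)) := by
  -- right linearity from symmetry
  have haddr : ∀ v x y : H, a v (x + y) = a v x + a v y := fun v x y => by
    rw [hsymm, haddl, hsymm x v, hsymm y v]
  have hsmulr : ∀ (r : ℝ) (v x : H), a v (r • x) = r * a v x := fun r v x => by
    rw [hsymm, hsmull, hsymm x v]
  have hsubl : ∀ x y v : H, a (x - y) v = a x v - a y v := fun x y v => by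
    have h1 := haddl x (-y) v
    have h2 : a (-y) v = -a y v := by
      have := hsmull (-1) y v; simpa using this
    rw [sub_eq_add_neg, h1, h2]; ring
  haveI : CompleteSpace W := hW.completeSpace_coe
  -- the bilinear form restricted to W
  let B₀ : W →ₗ[ℝ] W →ₗ[ℝ] ℝ :=
    LinearMap.mk₂ ℝ (fun x y : W => a x y)
      (fun x y v => by simpa using haddl x y v)
      (fun r x v => by simpa using hsmull r x v)
      (fun x y v => by simpa using haddr x y v)
      (fun r x v => by simpa using hsmulr r x v)
  let B : W →L[ℝ] W →L[ℝ] ℝ :=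
    LinearMap.mkContinuous₂ B₀ Ca (fun x y => by
      simpa [B₀, Real.norm_eq_abs] using hbdd x y)
  have hBapp : ∀ x y : W, B x y = a x y := fun x y => rfl
  have coercive : IsCoercive B := by
    refine ⟨α, hα, fun u => ?_⟩
    have := hcoer u
    rw [hBapp]
    calc α * ‖u‖ * ‖u‖ = α * ‖(u : H)‖ ^ 2 := by
          rw [Submodule.norm_coe]; ring
      _ ≤ a u u := hcoer u
  -- the functional w ↦ a z w on W
  let L₀ : W →ₗ[ℝ] ℝ :=
    { toFun := fun w => a z w
      map_add' := fun x y => by simpa using haddr z x y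
      map_smul' := fun r x => by simpa using hsmulr r z x }
  let L : W →L[ℝ] ℝ :=
    LinearMap.mkContinuous L₀ (Ca * ‖z‖) (fun w => by
      simpa [L₀, Real.norm_eq_abs] using hbdd z w)
  -- Lax–Milgram: solve B w0 w = L w
  set u : W := (InnerProductSpace.toDual ℝ W).symm L with hu
  set w0 : W := coercive.continuousLinearEquivOfBilin.symm u with hw0
  have hsolve : ∀ w : W, a (w0 : H) w = a z w := by
    intro w
    have h1 : (inner ℝ (coercive.continuousLinearEquivOfBilin w0) w : ℝ) = B w0 w :=
      coercive.continuousLinearEquivOfBilin_apply w0 w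
    rw [hw0, coercive.continuousLinearEquivOfBilin.apply_symm_apply] at h1
    have h2 : (inner ℝ u w : ℝ) = L w := InnerProductSpace.toDual_symm_apply
    have h3 : (L w : ℝ) = B w0 w := by rw [hw0]; exact h2.symm.trans h1
    simpa [hBapp, L, L₀, LinearMap.mkContinuous_apply] using h3.symm
  -- z - w0 ∈ Ṽ, hence zt = z - w0
  have hzw0 : ∀ w ∈ W, a (z - (w0 : H)) w = 0 := by
    intro w hw
    rw [hsubl, hsolve ⟨w, hw⟩]; simp
  have hd : z - (w0 : H) - zt = 0 := by
    set d := z - (w0 : H) - zt with hdd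
    have hdV : ∀ w ∈ W, a d w = 0 := by
      intro w hw
      rw [hdd, hsubl, hzw0 w hw, hztmem w hw]; ring
    have h1 : a zt d = F d := hzt d hdV
    have h2 : a z d = F d := hz d
    have h3 : a (w0 : H) d = 0 := by
      rw [hsymm]; exact hdV _ w0.2
    have hadd : a d d = 0 := by
      rw [hdd, hsubl, hsubl, h1, h2, h3]; ring
    have := hcoer d
    rw [hadd] at this
    have hn : ‖d‖ ^ 2 ≤ 0 := by nlinarith
    have : ‖d‖ = 0 := by nlinarith [sq_nonneg ‖d‖, norm_nonneg d]
    exact norm_eq_zero.mp this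
  have hzzt : z - zt = (w0 : H) := by
    have h := sub_eq_zero.mp hd
    rw [← h]; abel
  have hemem : z - (zt + q) ∈ W := by
    have : z - (zt + q) = (w0 : H) - q := by rw [← hzzt]; abel
    rw [this]
    exact W.sub_mem w0.2 hqmem
  refine ⟨hemem, ?_⟩
  set e := z - (zt + q) with he
  have hee : e = z - zt - q := by rw [he]; abel
  have haee : a e e = F e - G e := by
    have h1 : a e e = a z e - a zt e - a q e := by
      nth_rewrite 1 [hee]
      rw [hsubl, hsubl]
    rw [h1, hz e, hztmem e hemem, hq e hemem]; ring
  calc α * ‖e‖ ^ 2 ≤ a e e := hcoer e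
    _ = F e - G e := haee
end
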